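/- Let A ∈ ℝ^{N×d} satisfy RIP at level ℓ with constant δ_ℓ < 1. Then for every x ∈ ℝ^d with ‖x‖₂ ≤ 1 and ‖x‖₁ ≤ √ℓ, we have ‖Ax‖₂ ≤ 3√(1+δ_ℓ). -/

import Mathlib

open Finset Matrix

noncomputable def l1 {ι : Type*} [Fintype ι] (x : ι → ℝ) : ℝ := ∑ i, |x i|

noncomputable def l2 {ι : Type*} [Fintype ι] (x : ι → ℝ) : ℝ := Real.sqrt (∑ i, (x i) ^ 2)

open scoped Classical in
/-- `x` has at most `m` nonzero entries. -/
def sparse {ι : Type*} [Fintype ι] (m : ℕ) (x : ι → ℝ) : Prop :=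
  (Finset.univ.filter (fun i => x i ≠ 0)).card ≤ m

/-- Restricted Isometry Property at level `m` with constant `δ`. -/
def RIP {N d : ℕ} (A : Matrix (Fin N) (Fin d) ℝ) (m : ℕ) (δ : ℝ) : Prop :=
  ∀ x : Fin d → ℝ, sparse m x →
    (1 - δ) * (l2 x) ^ 2 ≤ (l2 (A.mulVec x)) ^ 2 ∧
    (l2 (A.mulVec x)) ^ 2 ≤ (1 + δ) * (l2 x) ^ 2

/-- Restriction of a vector to the coordinates in `S` (zero elsewhere). -/
def restr {d : ℕ} (S : Finset (Fin d)) (x : Fin d → ℝ) : Fin d → ℝ :=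
  fun i => if i ∈ S then x i else 0

/-!
Peel off the `L` largest entries of `x` in absolute value, apply the RIP to that block, and
repeat on the rest. Every entry left after a block is at most the block's average absolute value,
so the next block has `ℓ₂`-norm at most `1/√L` times the `ℓ₁`-norm of the block before it.
Summing over the blocks, `‖Ax‖₂ ≤ √(1+δ) (‖x‖₂ + ‖x‖₁/√L) ≤ 2 √(1+δ)`.
-/

section Norms

variable {ι : Type*} [Fintype ι]

lemma l2_nonneg (x : ι → ℝ) : 0 ≤ l2 x := Real.sqrt_nonneg _

lemma l2_zero : l2 (0 : ι → ℝ) = 0 := by simp [l2]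

lemma l2_eq_norm (x : ι → ℝ) : l2 x = ‖WithLp.toLp 2 x‖ := by
  simp [l2, EuclideanSpace.norm_eq, Real.norm_eq_abs, sq_abs]

lemma l2_add_le (u v : ι → ℝ) : l2 (u + v) ≤ l2 u + l2 v := by
  simpa only [l2_eq_norm, WithLp.toLp_add] using norm_add_le _ _

lemma eq_zero_of_l1_nonpos {x : ι → ℝ} (h : l1 x ≤ 0) : x = 0 := by
  have hsum : ∑ i, |x i| = 0 := le_antisymm h (sum_nonneg fun i _ => abs_nonneg (x i))
  funext i
  simpa using (sum_eq_zero_iff_of_nonneg fun j _ => abs_nonneg (x j)).1 hsum i (mem_univ i)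

end Norms

lemma Finset.exists_subset_card_eq_forall_le {α β : Type*} [DecidableEq α] [LinearOrder β]
    (f : α → β) (T : Finset α) {m : ℕ} (hm : m ≤ T.card) :
    ∃ S ⊆ T, S.card = m ∧ ∀ i ∈ T \ S, ∀ j ∈ S, f i ≤ f j := by
  induction m with
  | zero => exact ⟨∅, empty_subset T, card_empty, by simp⟩
  | succ m ih =>
    obtain ⟨S, hST, hcard, htop⟩ := ih (by omega)
    have hne : (T \ S).Nonempty := by
      rw [← card_pos, card_sdiff_of_subset hST]
      omega
    obtain ⟨k, hk, hkmax⟩ := (T \ S).exists_max_image f hne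
    refine ⟨insert k S, insert_subset (sdiff_subset hk) hST, ?_, ?_⟩
    · rw [card_insert_of_notMem (mem_sdiff.1 hk).2, hcard]
    · intro i hi j hj
      rw [sdiff_insert] at hi
      rcases mem_insert.1 hj with rfl | hj
      · exact hkmax i (mem_of_mem_erase hi)
      · exact htop i (mem_of_mem_erase hi) j hj

section Restriction

variable {d : ℕ} (x : Fin d → ℝ)

lemma restr_univ : restr univ x = x := by
  funext i
  simp [restr]

lemma restr_add_restr_sdiff {S T : Finset (Fin d)} (hST : S ⊆ T) :
    restr S x + restr (T \ S) x = restr T x := by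
  funext i
  by_cases hS : i ∈ S
  · simp [restr, hS, hST hS]
  · by_cases hT : i ∈ T <;> simp [restr, hS, hT]

lemma sparse_restr {S : Finset (Fin d)} {m : ℕ} (hS : S.card ≤ m) : sparse m (restr S x) := by
  classical
  refine (card_le_card fun i hi => ?_).trans hS
  by_contra hiS
  simp [restr, hiS] at hi

lemma l1_restr (S : Finset (Fin d)) : l1 (restr S x) = ∑ i ∈ S, |x i| := by
  simp [l1, restr, apply_ite abs, sum_ite_mem]

lemma l2_restr (S : Finset (Fin d)) : l2 (restr S x) = √(∑ i ∈ S, x i ^ 2) := by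
  simp [l2, restr, ite_pow, sum_ite_mem]

lemma l2_restr_le (S : Finset (Fin d)) : l2 (restr S x) ≤ l2 x := by
  rw [l2_restr, l2]
  exact Real.sqrt_le_sqrt (sum_le_univ_sum_of_nonneg fun i => sq_nonneg (x i))

lemma l2_restr_le_of_abs_le {S : Finset (Fin d)} {m : ℕ} {c : ℝ} (hS : S.card ≤ m) (hc : 0 ≤ c)
    (hx : ∀ i ∈ S, |x i| ≤ c) : l2 (restr S x) ≤ √m * c := by
  rw [l2_restr, Real.sqrt_le_left (by positivity), mul_pow, Real.sq_sqrt (Nat.cast_nonneg m)]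
  calc ∑ i ∈ S, x i ^ 2 ≤ ∑ _i ∈ S, c ^ 2 :=
        sum_le_sum fun i hi => sq_le_sq' (abs_le.1 (hx i hi)).1 (abs_le.1 (hx i hi)).2
    _ = S.card * c ^ 2 := by rw [sum_const, nsmul_eq_mul]
    _ ≤ m * c ^ 2 := by gcongr

end Restriction

namespace RIP

variable {N d L : ℕ} {A : Matrix (Fin N) (Fin d) ℝ} {δ : ℝ}

lemma l2_mulVec_le (hA : RIP A L δ) {y : Fin d → ℝ} (hy : sparse L y) :
    l2 (A *ᵥ y) ≤ √(1 + δ) * l2 y := by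
  rw [← Real.sqrt_sq (l2_nonneg (A *ᵥ y)), ← Real.sqrt_sq (l2_nonneg y),
    ← Real.sqrt_mul' _ (sq_nonneg _)]
  exact Real.sqrt_le_sqrt (hA y hy).2

/-- The bound `b` on the `L`-sparse pieces of `x` is charged to `‖x‖₂` for the first block and to
the `ℓ₁`-norm of the previous block for each later one. -/
theorem l2_mulVec_restr_le (hA : RIP A L δ) (hL : 0 < L) (x : Fin d → ℝ) (T : Finset (Fin d))
    {b : ℝ} (hb : ∀ S ⊆ T, S.card ≤ L → l2 (restr S x) ≤ b) :
    l2 (A *ᵥ restr T x) ≤ √(1 + δ) * (b + l1 (restr T x) / √L) := by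
  induction T using Finset.strongInduction generalizing b with
  | H T ih =>
  by_cases hT : T.card ≤ L
  · calc l2 (A *ᵥ restr T x) ≤ √(1 + δ) * l2 (restr T x) := hA.l2_mulVec_le (sparse_restr x hT)
      _ ≤ √(1 + δ) * (b + l1 (restr T x) / √L) := by
        gcongr
        exact le_add_of_le_of_nonneg (hb T subset_rfl hT) (by rw [l1_restr]; positivity)
  obtain ⟨S, hST, hS, htop⟩ := exists_subset_card_eq_forall_le (fun i => |x i|) T (not_le.1 hT).le
  set s := ∑ j ∈ S, |x j|
  have hb_tail : ∀ S' ⊆ T \ S, S'.card ≤ L → l2 (restr S' x) ≤ s / √L := by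
    intro S' hS' hcard
    have hx : ∀ i ∈ S', |x i| ≤ s / L := fun i hi => by
      have hsum := card_nsmul_le_sum S _ _ (htop i (hS' hi))
      rw [hS, nsmul_eq_mul] at hsum
      rw [le_div_iff₀ (by exact_mod_cast hL)]
      linarith
    calc l2 (restr S' x) ≤ √L * (s / L) := l2_restr_le_of_abs_le x hcard (by positivity) hx
      _ = s / √L := by
        field_simp
        rw [Real.sq_sqrt (Nat.cast_nonneg L), mul_comm]
  have head : l2 (A *ᵥ restr S x) ≤ √(1 + δ) * b :=
    (hA.l2_mulVec_le (sparse_restr x hS.le)).trans (by gcongr; exact hb S hST hS.le)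
  have tail := ih (T \ S) (sdiff_ssubset hST (card_pos.1 (hS ▸ hL))) hb_tail
  calc l2 (A *ᵥ restr T x) ≤ l2 (A *ᵥ restr S x) + l2 (A *ᵥ restr (T \ S) x) := by
        rw [← restr_add_restr_sdiff x hST, mulVec_add]
        exact l2_add_le _ _
    _ ≤ √(1 + δ) * b + √(1 + δ) * (s / √L + l1 (restr (T \ S) x) / √L) := add_le_add head tail
    _ = √(1 + δ) * (b + l1 (restr T x) / √L) := by
        rw [l1_restr, l1_restr, ← sum_sdiff hST]
        ring

end RIP

theorem stmt8_general {N d L : ℕ} (A : Matrix (Fin N) (Fin d) ℝ) (δ : ℝ)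
    (hRIP : RIP A L δ)
    (x : Fin d → ℝ) (h2 : l2 x ≤ 1) (h1 : l1 x ≤ Real.sqrt L) :
    l2 (A.mulVec x) ≤ 3 * Real.sqrt (1 + δ) := by
  rcases Nat.eq_zero_or_pos L with rfl | hL
  · have hx : x = 0 := eq_zero_of_l1_nonpos (by simpa using h1)
    rw [hx, mulVec_zero, l2_zero]
    positivity
  have key := hRIP.l2_mulVec_restr_le hL x univ fun S _ _ => l2_restr_le x S
  rw [restr_univ] at key
  calc l2 (A *ᵥ x) ≤ √(1 + δ) * (l2 x + l1 x / √L) := key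
    _ ≤ √(1 + δ) * (1 + 1) := by
      gcongr
      exact (div_le_one (by positivity)).2 h1
    _ ≤ 3 * √(1 + δ) := by nlinarith [Real.sqrt_nonneg (1 + δ)]

theorem stmt8 {N d L : ℕ} (A : Matrix (Fin N) (Fin d) ℝ) (δ : ℝ)
    (hδ0 : 0 ≤ δ) (hδ1 : δ < 1) (hRIP : RIP A L δ)
    (x : Fin d → ℝ) (h2 : l2 x ≤ 1) (h1 : l1 x ≤ Real.sqrt L) :
    l2 (A.mulVec x) ≤ 3 * Real.sqrt (1 + δ) :=
  stmt8_general A δ hRIP x h2 h1
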